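/- arXiv:1809.09457 — 2 statements merged into one kernel-verified Lean document; each statement's English description precedes it below -/
import Mathlib

section
/- Let μ be a nonzero locally finite Borel (Radon) measure on ℝ^k. Then for μ-almost every point x one has: (i) liminf_{r→0} μ(B_r(x))/r^k > 0, and (ii) limsup_{r→0} μ(B_r(x))/μ(B_{2r}(x)) ≥ 2^{-k}. -/
/-!
By Besicovitch's differentiation theorem, at `μ`-a.e. point `x` the Haar measure of small closed
balls around `x` is at most a constant multiple of their `μ`-measure; comparing `B̄(x, r/2)` with
`B(x, r)` gives `μ(B(x, r)) ≳ r^k`. If moreover `μ(B(x, r)) ≤ c μ(B(x, 2r))` held for all small `r`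
with `c < 2⁻ᵏ`, then along `r₀ 2⁻ⁿ` the ratio `μ(B(x, r))/r^k` would decay like `(c 2^k)ⁿ`,
contradicting the first bound.
-/

open MeasureTheory Metric Filter Set Topology
open scoped ENNReal

theorem liminf_eq_zero_of_eventually_le_mul_two_mul {g : ℝ → ℝ≥0∞} {d : ℝ≥0∞} (hd : d < 1)
    (hfin : ∀ᶠ r in 𝓝[>] 0, g r ≠ ∞) (hg : ∀ᶠ r in 𝓝[>] 0, g r ≤ d * g (2 * r)) :
    liminf g (𝓝[>] 0) = 0 := by
  obtain ⟨r₀, hr₀ : 0 < r₀, hsub⟩ := mem_nhdsGT_iff_exists_Ioc_subset.mp (hfin.and hg)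
  set s : ℕ → ℝ := fun n => r₀ / 2 ^ n
  have hs_mem : ∀ n, s n ∈ Ioc 0 r₀ := fun n =>
    ⟨div_pos hr₀ (by positivity), div_le_self hr₀.le (one_le_pow₀ one_le_two)⟩
  have hs_decay : ∀ n, g (s n) ≤ d ^ n * g r₀ := by
    intro n
    induction n with
    | zero => simp [s]
    | succ n ih =>
      have hs_succ : 2 * s (n + 1) = s n := by simp only [s, pow_succ]; field_simp
      calc g (s (n + 1)) ≤ d * g (2 * s (n + 1)) := (hsub (hs_mem (n + 1))).2
        _ ≤ d * (d ^ n * g r₀) := by rw [hs_succ]; gcongr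
        _ = d ^ (n + 1) * g r₀ := by ring
  have hs_tendsto : Tendsto s atTop (𝓝[>] 0) := by
    refine tendsto_nhdsWithin_iff.mpr ⟨?_, .of_forall fun n => (hs_mem n).1⟩
    simpa using tendsto_const_nhds.div_atTop (tendsto_pow_atTop_atTop_of_one_lt one_lt_two)
  have hbound_tendsto : Tendsto (fun n => d ^ n * g r₀) atTop (𝓝 0) := by
    simpa using ENNReal.Tendsto.mul_const (ENNReal.tendsto_pow_atTop_nhds_zero_of_lt_one hd)
      (Or.inr (hsub ⟨hr₀, le_rfl⟩).1)
  refine le_antisymm ?_ bot_le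
  calc liminf g (𝓝[>] 0) ≤ liminf (g ∘ s) atTop := hs_tendsto.liminf_le_liminf_comp
    _ ≤ liminf (fun n => d ^ n * g r₀) atTop := liminf_le_liminf (.of_forall hs_decay)
    _ = 0 := hbound_tendsto.liminf_eq

theorem div_ofReal_pow_le_mul_div_ofReal_pow_two_mul {a b c : ℝ≥0∞} (r : ℝ) (k : ℕ)
    (h : a ≤ c * b) :
    a / ENNReal.ofReal (r ^ k) ≤ c * 2 ^ k * (b / ENNReal.ofReal ((2 * r) ^ k)) := by
  have h2k : (2 : ℝ≥0∞) ^ k ≠ 0 := by positivity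
  have h2k' : (2 : ℝ≥0∞) ^ k ≠ ∞ := by simp
  rw [mul_pow, ENNReal.ofReal_mul (by positivity), ENNReal.ofReal_pow zero_le_two,
    ENNReal.ofReal_ofNat, mul_assoc, ← mul_div_assoc, ENNReal.mul_div_mul_left _ _ h2k h2k',
    ← mul_div_assoc]
  exact ENNReal.div_le_div_right h _

theorem one_div_two_pow_le_limsup_div_two_mul {f : ℝ → ℝ≥0∞} (k : ℕ)
    (hfin : ∀ᶠ r in 𝓝[>] 0, f r ≠ ∞)
    (hpos : 0 < liminf (fun r => f r / ENNReal.ofReal (r ^ k)) (𝓝[>] 0)) :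
    1 / 2 ^ k ≤ limsup (fun r => f r / f (2 * r)) (𝓝[>] 0) := by
  by_contra! hlt
  obtain ⟨c, hc_gt, hc_lt⟩ := exists_between hlt
  have hc0 : c ≠ 0 := (bot_le.trans_lt hc_gt).ne'
  have hctop : c ≠ ∞ := hc_lt.ne_top
  have hd : c * 2 ^ k < 1 := by
    calc c * 2 ^ k < 1 / 2 ^ k * 2 ^ k := ENNReal.mul_lt_mul_left (by positivity) (by simp) hc_lt
      _ = 1 := by rw [one_div, ENNReal.inv_mul_cancel (by positivity) (by simp)]
  have hdoubling : ∀ᶠ r in 𝓝[>] 0, f r / ENNReal.ofReal (r ^ k)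
      ≤ c * 2 ^ k * (f (2 * r) / ENNReal.ofReal ((2 * r) ^ k)) := by
    filter_upwards [eventually_lt_of_limsup_lt hc_gt] with r hr
    exact div_ofReal_pow_le_mul_div_ofReal_pow_two_mul r k
      ((ENNReal.div_le_iff_le_mul (.inr hctop) (.inr hc0)).mp hr.le)
  have hfin' : ∀ᶠ r in 𝓝[>] 0, f r / ENNReal.ofReal (r ^ k) ≠ ∞ := by
    filter_upwards [hfin, self_mem_nhdsWithin] with r hr hr0
    exact ENNReal.div_ne_top hr (ENNReal.ofReal_pos.mpr (pow_pos hr0 k)).ne'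
  exact hpos.ne' (liminf_eq_zero_of_eventually_le_mul_two_mul hd hfin' hdoubling)

theorem eventually_measure_ball_ne_top {X : Type*} [PseudoMetricSpace X] [MeasurableSpace X]
    (μ : Measure X) [IsLocallyFiniteMeasure μ] (x : X) :
    ∀ᶠ r in 𝓝[>] 0, μ (ball x r) ≠ ∞ := by
  have := (tendsto_closedBall_smallSets x).eventually (μ.finiteAt_nhds x).eventually
  filter_upwards [nhdsWithin_le_nhds this] with r hr
  exact (measure_mono ball_subset_closedBall |>.trans_lt hr).ne

theorem ae_exists_eventually_measure_closedBall_le_mul {X : Type*} [MetricSpace X]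
    [MeasurableSpace X] [BorelSpace X] [SecondCountableTopology X] [HasBesicovitchCovering X]
    (ν μ : Measure X) [IsLocallyFiniteMeasure ν] [IsLocallyFiniteMeasure μ] :
    ∀ᵐ x ∂μ, ∃ C : ℝ≥0∞, C ≠ ∞ ∧
      ∀ᶠ r in 𝓝[>] 0, ν (closedBall x r) ≤ C * μ (closedBall x r) := by
  filter_upwards [Besicovitch.ae_tendsto_rnDeriv ν μ, Measure.rnDeriv_lt_top ν μ]
    with x hx hfin
  have hC : ν.rnDeriv μ x + 1 ≠ ∞ := by simpa using hfin.ne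
  refine ⟨_, hC, ?_⟩
  filter_upwards [hx.eventually_lt_const (ENNReal.lt_add_right hfin.ne one_ne_zero)] with r hr
  exact (ENNReal.div_le_iff_le_mul (.inr hC) (.inr (by simp))).mp hr.le

theorem ae_liminf_measure_ball_div_pow_finrank_pos {E : Type*} [NormedAddCommGroup E]
    [NormedSpace ℝ E] [FiniteDimensional ℝ E] [MeasurableSpace E] [BorelSpace E]
    (μ : Measure E) [IsLocallyFiniteMeasure μ] :
    ∀ᵐ x ∂μ, 0 < liminf (fun r => μ (ball x r) / ENNReal.ofReal (r ^ Module.finrank ℝ E))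
      (𝓝[>] 0) := by
  set ν : Measure E := Measure.addHaar
  set V := ν (closedBall 0 2⁻¹)
  have hV : V ≠ 0 := (measure_closedBall_pos _ _ (by norm_num)).ne'
  filter_upwards [ae_exists_eventually_measure_closedBall_le_mul ν μ] with x ⟨C, hC, hle⟩
  refine (ENNReal.div_pos hV hC).trans_le (le_liminf_of_le (by isBoundedDefault) ?_)
  filter_upwards [eventually_nhdsGT_zero_mul_left (by norm_num : (0 : ℝ) < 2⁻¹) hle,
    self_mem_nhdsWithin] with r hr hr0
  replace hr0 : 0 < r := hr0
  have hball : ENNReal.ofReal (r ^ Module.finrank ℝ E) * V ≤ C * μ (ball x r) := by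
    calc ENNReal.ofReal (r ^ Module.finrank ℝ E) * V = ν (closedBall x (2⁻¹ * r)) := by
          rw [mul_comm 2⁻¹, Measure.addHaar_closedBall_mul ν x hr0.le (by norm_num)]
      _ ≤ C * μ (closedBall x (2⁻¹ * r)) := hr
      _ ≤ C * μ (ball x r) := by
          gcongr; exact closedBall_subset_ball (by linarith)
  rw [ENNReal.le_div_iff_mul_le (.inl (ENNReal.ofReal_pos.mpr (by positivity)).ne')
    (.inl ENNReal.ofReal_ne_top), div_eq_mul_inv, mul_right_comm, ← div_eq_mul_inv]
  exact ENNReal.div_le_of_le_mul (by rwa [mul_comm V, mul_comm _ C])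

theorem stmt0_general (k : ℕ) (μ : Measure (EuclideanSpace ℝ (Fin k)))
    [IsLocallyFiniteMeasure μ] :
    ∀ᵐ x ∂μ,
      0 < liminf (fun r : ℝ => μ (ball x r) / ENNReal.ofReal (r ^ k))
          (nhdsWithin (0 : ℝ) (Ioi 0)) ∧
      (1 / 2 ^ k : ENNReal) ≤
        limsup (fun r : ℝ => μ (ball x r) / μ (ball x (2 * r)))
          (nhdsWithin (0 : ℝ) (Ioi 0)) := by
  filter_upwards [ae_liminf_measure_ball_div_pow_finrank_pos μ] with x hx
  rw [finrank_euclideanSpace_fin] at hx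
  exact ⟨hx, one_div_two_pow_le_limsup_div_two_mul k (eventually_measure_ball_ne_top μ x) hx⟩

/-- For a nonzero locally finite Borel (Radon) measure `μ` on `ℝ^k`, for `μ`-a.e. `x`:
(i) `liminf_{r→0⁺} μ(B_r(x))/r^k > 0` and
(ii) `limsup_{r→0⁺} μ(B_r(x))/μ(B_{2r}(x)) ≥ 2^{-k}`. -/
theorem stmt0 (k : ℕ) (μ : Measure (EuclideanSpace ℝ (Fin k)))
    [IsLocallyFiniteMeasure μ] (hμ : μ ≠ 0) :
    ∀ᵐ x ∂μ,
      0 < liminf (fun r : ℝ => μ (ball x r) / ENNReal.ofReal (r ^ k))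
          (nhdsWithin (0 : ℝ) (Ioi 0)) ∧
      (1 / 2 ^ k : ENNReal) ≤
        limsup (fun r : ℝ => μ (ball x r) / μ (ball x (2 * r)))
          (nhdsWithin (0 : ℝ) (Ioi 0)) :=
  stmt0_general k μ
end

section
/- For Q ≥ 2 and points P₁,…,P_{Q−1}, S₁,…,S_{Q−1} ∈ ℝⁿ, let G_{Q−1}(P,S)² = min over permutations σ of {1,…,Q−1} of Σ_{i=1}^{Q−1} |P_i − S_{σ(i)}|², and let G_Q(P∪{0}, S∪{0})² = min over permutations τ of {1,…,Q} of Σ_{i=1}^{Q} |A_i − B_{τ(i)}|², where A = (P₁,…,P_{Q−1},0) and B = (S₁,…,S_{Q−1},0). Then G_{Q−1}(P,S) ≤ √2 · G_Q(P∪{0}, S∪{0}). -/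
open Finset

private lemma norm_sub_sq_le' {E : Type*} [NormedAddCommGroup E] (a b : E) :
    ‖a - b‖ ^ 2 ≤ 2 * ‖a‖ ^ 2 + 2 * ‖b‖ ^ 2 := by
  have h := norm_sub_le a b
  have h2 : ‖a - b‖ ^ 2 ≤ (‖a‖ + ‖b‖) ^ 2 := by
    apply pow_le_pow_left₀ (norm_nonneg _) h
  nlinarith [sq_nonneg (‖a‖ - ‖b‖)]

/-- Appending the point `0` to two `Q`-tuples can decrease their optimal-matching `L²`
distance by at most the factor `√2`:  `G_{Q}(P,S) ≤ √2 · G_{Q+1}(P∪{0}, S∪{0})`. -/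
theorem stmt11 (n Q : ℕ) (hQ : 1 ≤ Q)
    (P S : Fin Q → EuclideanSpace ℝ (Fin n)) :
    Real.sqrt (⨅ σ : Equiv.Perm (Fin Q), ∑ i, ‖P i - S (σ i)‖ ^ 2)
      ≤ Real.sqrt 2 * Real.sqrt (⨅ τ : Equiv.Perm (Fin (Q + 1)),
          ∑ i, ‖(Fin.snoc P 0 : Fin (Q + 1) → EuclideanSpace ℝ (Fin n)) i
                - (Fin.snoc S 0 : Fin (Q + 1) → EuclideanSpace ℝ (Fin n)) (τ i)‖ ^ 2) := by
  set A : Fin (Q + 1) → EuclideanSpace ℝ (Fin n) := Fin.snoc P 0 with hA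
  set B : Fin (Q + 1) → EuclideanSpace ℝ (Fin n) := Fin.snoc S 0 with hB
  set F : Equiv.Perm (Fin Q) → ℝ := fun σ => ∑ i, ‖P i - S (σ i)‖ ^ 2 with hF
  set G : Equiv.Perm (Fin (Q + 1)) → ℝ := fun τ => ∑ i, ‖A i - B (τ i)‖ ^ 2 with hG
  have hGnn : ∀ τ, 0 ≤ G τ := fun τ => Finset.sum_nonneg fun i _ => sq_nonneg _
  have key : ∀ τ : Equiv.Perm (Fin (Q + 1)), ∃ σ : Equiv.Perm (Fin Q), F σ ≤ 2 * G τ := by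
    intro τ
    set j₀ := τ (Fin.last Q) with hj₀
    set τ' : Equiv.Perm (Fin (Q + 1)) := τ.trans (Equiv.swap j₀ (Fin.last Q)) with hτ'
    have hτ'last : τ' (Fin.last Q) = Fin.last Q := by
      simp [hτ', ← hj₀, Equiv.swap_apply_left]
    have hne : ∀ i : Fin Q, τ' i.castSucc ≠ Fin.last Q := by
      intro i h
      have h2 : τ' i.castSucc = τ' (Fin.last Q) := h.trans hτ'last.symm
      exact (Fin.castSucc_lt_last i).ne (τ'.injective h2)
    have hinj : Function.Injective (fun i : Fin Q => (τ' i.castSucc).castPred (hne i)) := by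
      intro a b h
      have h2 : τ' a.castSucc = τ' b.castSucc := by
        have := congrArg Fin.castSucc h
        simpa [Fin.castSucc_castPred] using this
      exact Fin.castSucc_injective _ (τ'.injective h2)
    set σ₀ : Equiv.Perm (Fin Q) :=
      Equiv.ofBijective _ (Finite.injective_iff_bijective.mp hinj) with hσ₀def
    have hσ₀ : ∀ i, Fin.castSucc (σ₀ i) = τ' i.castSucc := fun i => Fin.castSucc_castPred (τ' i.castSucc) (hne i)
    refine ⟨σ₀, ?_⟩
    have hf'last : ‖A (Fin.last Q) - B (τ' (Fin.last Q))‖ ^ 2 = 0 := by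
      simp [hτ'last, hA, hB]
    have hFσ₀ : F σ₀ = ∑ i : Fin (Q + 1), ‖A i - B (τ' i)‖ ^ 2 := by
      rw [hF]
      simp only
      rw [Fin.sum_univ_castSucc, hf'last, add_zero]
      refine Finset.sum_congr rfl fun i _ => ?_
      have h1 : A i.castSucc = P i := Fin.snoc_castSucc ..
      have h2 : B (τ' i.castSucc) = S (σ₀ i) := by
        rw [← hσ₀ i]; exact Fin.snoc_castSucc ..
      rw [h1, h2]
    rw [hFσ₀]
    by_cases hj : j₀ = Fin.last Q
    · have hττ' : τ' = τ := by
        ext i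
        simp [hτ', hj, Equiv.swap_self]
      rw [hττ']
      have h := hGnn τ
      rw [hG] at h
      simp only at h ⊢
      linarith
    · set i₀ := τ.symm (Fin.last Q) with hi₀def
      have hτi₀ : τ i₀ = Fin.last Q := τ.apply_symm_apply _
      have hi₀ : i₀ ≠ Fin.last Q := by
        intro h
        exact hj (by rw [hj₀, ← h, hτi₀]; exact h.symm)
      have hflast : ‖A (Fin.last Q) - B (τ (Fin.last Q))‖ ^ 2 = ‖B j₀‖ ^ 2 := by
        rw [← hj₀]
        simp [hA]
      have hfi₀ : ‖A i₀ - B (τ i₀)‖ ^ 2 = ‖A i₀‖ ^ 2 := by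
        rw [hτi₀]; simp [hB]
      have hτ'i₀ : τ' i₀ = j₀ := by
        simp [hτ', hτi₀, Equiv.swap_apply_right]
      have hf'i₀ : ‖A i₀ - B (τ' i₀)‖ ^ 2
          ≤ 2 * ‖A i₀ - B (τ i₀)‖ ^ 2 + 2 * ‖A (Fin.last Q) - B (τ (Fin.last Q))‖ ^ 2 := by
        rw [hτ'i₀, hfi₀, hflast]
        exact norm_sub_sq_le' _ _
      have hsub : ({i₀, Fin.last Q} : Finset (Fin (Q + 1))) ⊆ univ := subset_univ _
      have hrest : ∀ i ∈ univ \ ({i₀, Fin.last Q} : Finset (Fin (Q + 1))),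
          ‖A i - B (τ' i)‖ ^ 2 = ‖A i - B (τ i)‖ ^ 2 := by
        intro i hi
        simp only [Finset.mem_sdiff, Finset.mem_insert, Finset.mem_singleton, Finset.mem_univ,
          true_and, not_or] at hi
        obtain ⟨h1, h2⟩ := hi
        have ht1 : τ i ≠ Fin.last Q := by
          intro h
          exact h1 (τ.injective (h.trans hτi₀.symm))
        have ht2 : τ i ≠ j₀ := by
          intro h
          rw [hj₀] at h
          exact h2 (τ.injective h)
        have : τ' i = τ i := by
          simp [hτ', Equiv.swap_apply_of_ne_of_ne ht2 ht1]
        rw [this]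
      have e1 : ∑ i : Fin (Q + 1), ‖A i - B (τ' i)‖ ^ 2
          = ∑ i ∈ univ \ ({i₀, Fin.last Q} : Finset (Fin (Q + 1))), ‖A i - B (τ' i)‖ ^ 2
            + (‖A i₀ - B (τ' i₀)‖ ^ 2 + ‖A (Fin.last Q) - B (τ' (Fin.last Q))‖ ^ 2) := by
        rw [← Finset.sum_sdiff hsub, Finset.sum_pair hi₀]
      have e2 : G τ
          = ∑ i ∈ univ \ ({i₀, Fin.last Q} : Finset (Fin (Q + 1))), ‖A i - B (τ i)‖ ^ 2
            + (‖A i₀ - B (τ i₀)‖ ^ 2 + ‖A (Fin.last Q) - B (τ (Fin.last Q))‖ ^ 2) := by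
        rw [hG]
        simp only
        rw [← Finset.sum_sdiff hsub, Finset.sum_pair hi₀]
      rw [e1, e2, Finset.sum_congr rfl hrest, hf'last]
      have hnn : 0 ≤ ∑ i ∈ univ \ ({i₀, Fin.last Q} : Finset (Fin (Q + 1))),
          ‖A i - B (τ i)‖ ^ 2 := Finset.sum_nonneg fun i _ => sq_nonneg _
      linarith
  obtain ⟨τ₀, hτ₀⟩ := Finite.exists_min G
  obtain ⟨σ₀, hσ₀⟩ := key τ₀
  have h1 : (⨅ σ, F σ) ≤ F σ₀ := ciInf_le (Set.finite_range F).bddBelow σ₀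
  have h2 : (⨅ τ, G τ) = G τ₀ :=
    le_antisymm (ciInf_le (Set.finite_range G).bddBelow τ₀) (le_ciInf hτ₀)
  calc Real.sqrt (⨅ σ, F σ) ≤ Real.sqrt (2 * ⨅ τ, G τ) := by
        apply Real.sqrt_le_sqrt
        rw [h2]
        linarith [h1.trans hσ₀]
    _ = Real.sqrt 2 * Real.sqrt (⨅ τ, G τ) := Real.sqrt_mul (by norm_num) _
end
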